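/- OMP first-step separation: let y = X α + ε with α supported on S_* of size s, let X/√n satisfy RIP of order s+1 with constant ζ_{s+1}, assume ‖ε‖_∞ ≤ κ_ε, and let the noisy correlations be (γ)_j = X_j^T y + η_j with |η_j| ≤ B for all j. If n(1 - ζ_{s+1}(√s + 1)) ‖α_{S_*}‖₂ > n √(1+ζ_{s+1}) κ_ε (√s + 1) + 2B√s, then max_{j ∈ S_*} |(γ)_j| > max_{j ∉ S_*} |(γ)_j|, i.e., the index of maximal noisy correlation lies in the true support S_*. -/
import Mathlib


open Matrix

noncomputable def norm2 {n : ℕ} (v : Fin n → ℝ) : ℝ := Real.sqrt (∑ i, v i ^ 2)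

def IsRIP {n p : ℕ} (X : Matrix (Fin n) (Fin p) ℝ) (K : ℕ) (ζ : ℝ) : Prop :=
  ∀ v : Fin p → ℝ, (Finset.univ.filter (fun i => v i ≠ 0)).card ≤ K →
    (1 - ζ) * norm2 v ^ 2 ≤ norm2 (X.mulVec v) ^ 2 ∧
      norm2 (X.mulVec v) ^ 2 ≤ (1 + ζ) * norm2 v ^ 2

lemma norm2_sq' {n : ℕ} (v : Fin n → ℝ) : norm2 v ^ 2 = ∑ i, v i ^ 2 := by
  rw [norm2, Real.sq_sqrt]; positivity

lemma abs_le_of_sq_le' {x y : ℝ} (hy : 0 ≤ y) (h : x ^ 2 ≤ y ^ 2) : |x| ≤ y := by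
  have := Real.sqrt_le_sqrt h
  rwa [Real.sqrt_sq_eq_abs, Real.sqrt_sq hy] at this

lemma rip_bounds' {n p : ℕ} {X : Matrix (Fin n) (Fin p) ℝ} {K : ℕ} {ζ : ℝ}
    (h : IsRIP ((1 / Real.sqrt n) • X) K ζ) (hn : 0 < n)
    (v : Fin p → ℝ) (hv : (Finset.univ.filter (fun i => v i ≠ 0)).card ≤ K) :
    (1 - ζ) * n * (∑ i, v i ^ 2) ≤ (∑ i, (X.mulVec v i) ^ 2) ∧
      (∑ i, (X.mulVec v i) ^ 2) ≤ (1 + ζ) * n * (∑ i, v i ^ 2) := by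
  obtain ⟨h1, h2⟩ := h v hv
  have hmv : ((1 / Real.sqrt n) • X).mulVec v = fun i => (1 / Real.sqrt n) * X.mulVec v i := by
    funext i
    simp [Matrix.smul_mulVec]
  have hnpos : (0:ℝ) < n := by exact_mod_cast hn
  have hsq : (1 / Real.sqrt n) ^ 2 = 1 / n := by
    rw [div_pow, one_pow, Real.sq_sqrt hnpos.le]
  have hQ : norm2 (((1 / Real.sqrt n) • X).mulVec v) ^ 2
      = (1 / n) * ∑ i, (X.mulVec v i) ^ 2 := by
    rw [norm2_sq', hmv]
    simp_rw [mul_pow, hsq, ← Finset.mul_sum]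
  rw [hQ, norm2_sq'] at h1 h2
  have key : (↑n : ℝ) * (1 / ↑n * ∑ i, (X.mulVec v i) ^ 2) = ∑ i, (X.mulVec v i) ^ 2 := by
    field_simp
  constructor
  · have := mul_le_mul_of_nonneg_left h1 hnpos.le
    rw [key] at this; nlinarith
  · have := mul_le_mul_of_nonneg_left h2 hnpos.le
    rw [key] at this; nlinarith


set_option maxHeartbeats 1000000 in
/-- OMP first-step separation: under the model `y = Xα + ε` with `α` supported on `S_*`
of size `s`, RIP of order `s+1` for `X/√n`, bounded noise `‖ε‖_∞ ≤ κ_ε`, and noisy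
correlations `γ_j = X_jᵀ y + η_j` with `|η_j| ≤ B`, if
`n(1 - ζ(√s+1))‖α_{S_*}‖₂ > n √(1+ζ) κ_ε (√s+1) + 2B√s` then every index of maximal
absolute noisy correlation lies in `S_*`. -/
theorem omp_first_step_separation {n p s : ℕ} (X : Matrix (Fin n) (Fin p) ℝ)
    (α : Fin p → ℝ) (S : Finset (Fin p)) (hcard : S.card = s) (hs : 0 < s)
    (hsupp : ∀ j, α j ≠ 0 → j ∈ S)
    (ε : Fin n → ℝ) (κε : ℝ) (hε : ∀ i, |ε i| ≤ κε)
    (ζ : ℝ) (hζ0 : 0 ≤ ζ)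
    (hRIP : IsRIP ((1 / Real.sqrt n) • X) (s + 1) ζ)
    (η : Fin p → ℝ) (B : ℝ) (hη : ∀ j, |η j| ≤ B)
    (γ : Fin p → ℝ)
    (hγ : γ = fun j => Xᵀ.mulVec (X.mulVec α + ε) j + η j)
    (hsep : n * Real.sqrt (1 + ζ) * κε * (Real.sqrt s + 1) + 2 * B * Real.sqrt s <
      n * (1 - ζ * (Real.sqrt s + 1)) * norm2 α) :
    ∀ j ∉ S, |γ j| < S.sup' (Finset.card_pos.mp (by omega)) (fun j' => |γ j'|) := by
  intro j hj
  have hB : 0 ≤ B := le_trans (abs_nonneg _) (hη j)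
  set r := Real.sqrt s with hr_def
  have hr : 0 < r := Real.sqrt_pos.mpr (by exact_mod_cast hs)
  set a := norm2 α with ha_def
  have ha0 : 0 ≤ a := Real.sqrt_nonneg _
  have ha2 : a ^ 2 = ∑ i, α i ^ 2 := norm2_sq' α
  have hζ1 : (0:ℝ) ≤ 1 + ζ := by linarith
  have hsq1ζ : Real.sqrt (1 + ζ) ^ 2 = 1 + ζ := Real.sq_sqrt hζ1
  -- n > 0
  have hn : 0 < n := by
    by_contra hn0
    have hn0' : n = 0 := by omega
    subst hn0'
    simp only [Nat.cast_zero, zero_mul, mul_zero, zero_add] at hsep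
    nlinarith
  have hκ : 0 ≤ κε := le_trans (abs_nonneg _) (hε ⟨0, hn⟩)
  have hnR : (0:ℝ) < n := by exact_mod_cast hn
  set K := (n:ℝ) * Real.sqrt (1 + ζ) * κε with hK_def
  have hK0 : 0 ≤ K := by positivity
  -- a > 0
  have ha : 0 < a := by
    rcases lt_or_eq_of_le ha0 with h | h
    · exact h
    · exfalso; rw [← h] at hsep; nlinarith
  -- α j = 0 for j ∉ S
  have hαoff : ∀ j', j' ∉ S → α j' = 0 := by
    intro j' hj'
    by_contra h
    exact hj' (hsupp j' h)
  -- ε ℓ2 bound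
  have hε2 : ∑ i, ε i ^ 2 ≤ n * κε ^ 2 := by
    calc ∑ i, ε i ^ 2 ≤ ∑ _i : Fin n, κε ^ 2 := by
          apply Finset.sum_le_sum
          intro i _
          have := abs_le.mp (hε i)
          nlinarith [this.1, this.2]
      _ = n * κε ^ 2 := by simp [Finset.sum_const, Finset.card_univ]
  -- α sparsity
  have hαsparse : (Finset.univ.filter (fun i => α i ≠ 0)).card ≤ s + 1 := by
    have hsub : Finset.univ.filter (fun i => α i ≠ 0) ⊆ S := by
      intro i hi
      exact hsupp i (Finset.mem_filter.mp hi).2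
    calc (Finset.univ.filter (fun i => α i ≠ 0)).card ≤ S.card := Finset.card_le_card hsub
      _ ≤ s + 1 := by omega
  have hQα := rip_bounds' hRIP hn α hαsparse
  -- column sq norm bound, for any j'
  have hcol : ∀ j' : Fin p, ∑ i, X i j' ^ 2 ≤ (1 + ζ) * n := by
    intro j'
    set v : Fin p → ℝ := fun k => if k = j' then 1 else 0 with hv_def
    have hvs : (Finset.univ.filter (fun i => v i ≠ 0)).card ≤ s + 1 := by
      have hsub : Finset.univ.filter (fun i => v i ≠ 0) ⊆ {j'} := by
        intro i hi
        have := (Finset.mem_filter.mp hi).2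
        simp only [hv_def] at this
        by_contra hne
        simp only [Finset.mem_singleton] at hne
        simp [hne] at this
      calc _ ≤ ({j'} : Finset (Fin p)).card := Finset.card_le_card hsub
        _ = 1 := Finset.card_singleton _
        _ ≤ s + 1 := by omega
    have hmv : ∀ i, X.mulVec v i = X i j' := by
      intro i
      simp [hv_def, Matrix.mulVec, dotProduct, mul_ite, mul_one, mul_zero]
    have hNv : ∑ i, v i ^ 2 = 1 := by
      simp [hv_def, ite_pow]
    have := (rip_bounds' hRIP hn v hvs).2
    rw [hNv] at this
    simp_rw [hmv] at this
    linarith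
  -- correlation with noise columnwise: |∑ i, X i j' * ε i| ≤ K
  have hXε : ∀ j' : Fin p, |∑ i, X i j' * ε i| ≤ K := by
    intro j'
    apply abs_le_of_sq_le' hK0
    have hcs := Finset.sum_mul_sq_le_sq_mul_sq Finset.univ (fun i => X i j') ε
    have hK2 : K ^ 2 = (n:ℝ) ^ 2 * (1 + ζ) * κε ^ 2 := by
      rw [hK_def, mul_pow, mul_pow, hsq1ζ]
    rw [hK2]
    nlinarith [hcol j', hε2, Finset.sum_nonneg (fun i (_ : i ∈ Finset.univ) => sq_nonneg (X i j')),
      Finset.sum_nonneg (fun i (_ : i ∈ Finset.univ) => sq_nonneg (ε i))]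
  -- off-support signal bound via polarization: |∑ i, X i j * (Xα)_i| ≤ ζ * n * a
  have hαj : α j = 0 := hαoff j hj
  set T := ∑ i, X i j * X.mulVec α i with hT_def
  have hT : |T| ≤ ζ * n * a := by
    set u : Fin p → ℝ := fun k => if k = j then a else 0 with hu_def
    have hmu : ∀ i, X.mulVec u i = X i j * a := by
      intro i
      simp [hu_def, Matrix.mulVec, dotProduct, mul_ite, mul_zero]
    have hNu : ∑ k, u k ^ 2 = a ^ 2 := by simp [hu_def, ite_pow]
    have hcross : ∀ k, u k * α k = 0 := by
      intro k
      rcases eq_or_ne k j with h | h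
      · subst h; simp [hu_def, hαj]
      · simp [hu_def, h]
    have hsparse : ∀ (v : Fin p → ℝ), (∀ i, v i ≠ 0 → i = j ∨ α i ≠ 0) →
        (Finset.univ.filter (fun i => v i ≠ 0)).card ≤ s + 1 := by
      intro v hv
      have hsub : Finset.univ.filter (fun i => v i ≠ 0) ⊆ insert j S := by
        intro i hi
        rcases hv i (Finset.mem_filter.mp hi).2 with h | h
        · exact Finset.mem_insert.mpr (Or.inl h)
        · exact Finset.mem_insert.mpr (Or.inr (hsupp i h))
      calc _ ≤ (insert j S).card := Finset.card_le_card hsub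
        _ ≤ S.card + 1 := Finset.card_insert_le _ _
        _ = s + 1 := by rw [hcard]
    have hps : (Finset.univ.filter (fun i => (u + α) i ≠ 0)).card ≤ s + 1 := by
      apply hsparse
      intro i hi
      by_contra hcon
      push_neg at hcon
      simp only [Pi.add_apply, hu_def, if_neg hcon.1, zero_add] at hi
      exact hi hcon.2
    have hms : (Finset.univ.filter (fun i => (u - α) i ≠ 0)).card ≤ s + 1 := by
      apply hsparse
      intro i hi
      by_contra hcon
      push_neg at hcon
      simp only [Pi.sub_apply, hu_def, if_neg hcon.1, zero_sub, neg_ne_zero] at hi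
      exact hi hcon.2
    have hNp : ∑ k, (u + α) k ^ 2 = 2 * a ^ 2 := by
      have : ∀ k, (u + α) k ^ 2 = u k ^ 2 + α k ^ 2 + 2 * (u k * α k) := by
        intro k; simp [Pi.add_apply]; ring
      simp_rw [this, Finset.sum_add_distrib, hcross]
      simp only [mul_zero, Finset.sum_const_zero, add_zero]
      rw [hNu, ← ha2]; ring
    have hNm : ∑ k, (u - α) k ^ 2 = 2 * a ^ 2 := by
      have : ∀ k, (u - α) k ^ 2 = u k ^ 2 + α k ^ 2 - 2 * (u k * α k) := by
        intro k; simp [Pi.sub_apply]; ring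
      simp_rw [this, Finset.sum_sub_distrib, Finset.sum_add_distrib, hcross]
      simp only [mul_zero, Finset.sum_const_zero, sub_zero]
      rw [hNu, ← ha2]; ring
    have hQp := rip_bounds' hRIP hn (u + α) hps
    have hQm := rip_bounds' hRIP hn (u - α) hms
    rw [hNp] at hQp
    rw [hNm] at hQm
    have hpol : (∑ i, (X.mulVec (u + α) i) ^ 2) - (∑ i, (X.mulVec (u - α) i) ^ 2)
        = 4 * a * T := by
      have h1 : ∀ i, X.mulVec (u + α) i = X i j * a + X.mulVec α i := by
        intro i; rw [Matrix.mulVec_add]; simp [hmu i]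
      have h2 : ∀ i, X.mulVec (u - α) i = X i j * a - X.mulVec α i := by
        intro i; rw [Matrix.mulVec_sub]; simp [hmu i]
      rw [← Finset.sum_sub_distrib]
      have h3 : ∀ i, (X.mulVec (u + α) i) ^ 2 - (X.mulVec (u - α) i) ^ 2
          = 4 * a * (X i j * X.mulVec α i) := by
        intro i; rw [h1 i, h2 i]; ring
      simp_rw [h3]
      rw [← Finset.mul_sum]
    have hub : 4 * a * T ≤ 4 * ζ * (n:ℝ) * a ^ 2 := by linarith [hpol, hQp.2, hQm.1]
    have hlb : -(4 * ζ * (n:ℝ) * a ^ 2) ≤ 4 * a * T := by linarith [hpol, hQp.1, hQm.2]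
    have h4a : (0:ℝ) < 4 * a := by linarith
    rw [abs_le]
    constructor
    · have h1 : (4 * a) * (-(ζ * n * a)) ≤ (4 * a) * T := by linarith [hlb]
      linarith [le_of_mul_le_mul_left h1 h4a]
    · have h1 : (4 * a) * T ≤ (4 * a) * (ζ * n * a) := by linarith [hub]
      linarith [le_of_mul_le_mul_left h1 h4a]
  -- setup max
  have hSne : S.Nonempty := Finset.card_pos.mp (by omega)
  obtain ⟨j0, hj0⟩ := hSne
  have hSne' : S.Nonempty := ⟨j0, hj0⟩
  suffices hgoal : |γ j| < S.sup' hSne' (fun j' => |γ j'|) by exact hgoal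
  set M := S.sup' hSne' (fun j' => |γ j'|) with hM_def
  have hM0 : 0 ≤ M := le_trans (abs_nonneg (γ j0)) (Finset.le_sup' (fun j' => |γ j'|) hj0)
  set w : Fin n → ℝ := X.mulVec α + ε with hw_def
  set c : Fin p → ℝ := Xᵀ.mulVec w with hc_def
  have hγc : ∀ j', γ j' = c j' + η j' := by intro j'; rw [hγ]
  have hMc : ∀ j' ∈ S, |c j'| ≤ M + B := by
    intro j' hj'
    have h1 : c j' = γ j' - η j' := by rw [hγc j']; ring
    calc |c j'| = |γ j' - η j'| := by rw [h1]
      _ ≤ |γ j'| + |η j'| := abs_sub _ _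
      _ ≤ M + B := add_le_add (Finset.le_sup' (fun j2 => |γ j2|) hj') (hη j')
  -- sum over support equals full sum
  have hsum_restrict : ∑ j' ∈ S, α j' * c j' = ∑ j', α j' * c j' :=
    Finset.sum_subset (Finset.subset_univ S)
      (fun x _ hx => by rw [hαoff x hx, zero_mul])
  -- l1 bound on alpha over S
  have hl1 : ∑ j' ∈ S, |α j'| ≤ r * a := by
    have hra : (0:ℝ) ≤ r * a := mul_nonneg hr.le ha0
    have h1 : (∑ j' ∈ S, |α j'|) ^ 2 ≤ (S.card : ℝ) * ∑ j' ∈ S, |α j'| ^ 2 :=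
      sq_sum_le_card_mul_sum_sq
    have h2 : ∑ j' ∈ S, |α j'| ^ 2 ≤ a ^ 2 := by
      rw [ha2]
      simp_rw [sq_abs]
      exact Finset.sum_le_sum_of_subset_of_nonneg (Finset.subset_univ S)
        (fun i _ _ => sq_nonneg _)
    have h3 : (r * a) ^ 2 = (s : ℝ) * a ^ 2 := by
      rw [mul_pow, hr_def, Real.sq_sqrt (by positivity : (0:ℝ) ≤ (s:ℝ))]
    have h4 : (∑ j' ∈ S, |α j'|) ^ 2 ≤ (r * a) ^ 2 := by
      rw [h3, ← hcard]
      nlinarith [h1, h2, (by positivity : (0:ℝ) ≤ (S.card:ℝ))]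
    have := abs_le_of_sq_le' hra h4
    rwa [abs_of_nonneg (Finset.sum_nonneg (fun i _ => abs_nonneg _))] at this
  -- upper bound for ∑ α c
  have hup : ∑ j' ∈ S, α j' * c j' ≤ (M + B) * (r * a) := by
    calc ∑ j' ∈ S, α j' * c j' ≤ ∑ j' ∈ S, |α j'| * (M + B) := by
          apply Finset.sum_le_sum
          intro j' hj'
          calc α j' * c j' ≤ |α j' * c j'| := le_abs_self _
            _ = |α j'| * |c j'| := abs_mul _ _
            _ ≤ |α j'| * (M + B) := mul_le_mul_of_nonneg_left (hMc j' hj') (abs_nonneg _)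
      _ = (∑ j' ∈ S, |α j'|) * (M + B) := by rw [Finset.sum_mul]
      _ ≤ (r * a) * (M + B) := by
          apply mul_le_mul_of_nonneg_right hl1
          linarith
      _ = (M + B) * (r * a) := by ring
  -- identity : ∑ α c = ∑ (Xα) w
  have hident : ∑ j', α j' * c j' = ∑ i, X.mulVec α i * w i := by
    have h1 : ∀ j', c j' = ∑ i, X i j' * w i := by
      intro j'
      simp [hc_def, Matrix.mulVec, dotProduct, Matrix.transpose_apply]
    simp_rw [h1, Finset.mul_sum]
    rw [Finset.sum_comm]
    apply Finset.sum_congr rfl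
    intro i _
    have h2 : X.mulVec α i = ∑ j', X i j' * α j' := by
      simp [Matrix.mulVec, dotProduct]
    rw [h2, Finset.sum_mul]
    apply Finset.sum_congr rfl
    intro j' _
    ring
  -- cross term bound
  have hcross2 : |∑ i, X.mulVec α i * ε i| ≤ K * a := by
    apply abs_le_of_sq_le' (by positivity)
    have hcs := Finset.sum_mul_sq_le_sq_mul_sq Finset.univ (fun i => X.mulVec α i) ε
    have hKa2 : (K * a) ^ 2 = (n:ℝ) ^ 2 * (1 + ζ) * κε ^ 2 * a ^ 2 := by
      have h0 : ((n:ℝ) * Real.sqrt (1 + ζ) * κε * a) ^ 2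
          = (n:ℝ) ^ 2 * Real.sqrt (1 + ζ) ^ 2 * (κε ^ 2 * a ^ 2) := by ring
      rw [hK_def, h0, hsq1ζ]; ring
    rw [hKa2]
    have hq : ∑ i, X.mulVec α i ^ 2 ≤ (1 + ζ) * n * a ^ 2 := by
      rw [ha2]; exact hQα.2
    have hmul : (∑ i, X.mulVec α i ^ 2) * (∑ i, ε i ^ 2)
        ≤ ((1 + ζ) * n * a ^ 2) * (n * κε ^ 2) :=
      mul_le_mul hq hε2
        (Finset.sum_nonneg (fun i _ => sq_nonneg (ε i)))
        (by positivity)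
    nlinarith [hcs, hmul]
  -- lower bound for ∑ (Xα) w
  have hlow : (1 - ζ) * n * a ^ 2 - K * a ≤ ∑ i, X.mulVec α i * w i := by
    have h1 : ∑ i, X.mulVec α i * w i
        = (∑ i, X.mulVec α i ^ 2) + ∑ i, X.mulVec α i * ε i := by
      rw [← Finset.sum_add_distrib]
      apply Finset.sum_congr rfl
      intro i _
      rw [hw_def]
      simp only [Pi.add_apply]
      ring
    rw [h1]
    have h2 := hQα.1
    rw [← ha2] at h2
    have h3 := abs_le.mp hcross2
    linarith [h2, h3.1]
  -- divide by a
  have hdiv : (1 - ζ) * n * a - K ≤ r * (M + B) := by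
    have h1 : a * ((1 - ζ) * n * a - K) ≤ a * (r * (M + B)) := by
      have := hup
      rw [hsum_restrict, hident] at this
      nlinarith [hlow, this]
    exact le_of_mul_le_mul_left h1 ha
  -- bound |γ j|
  have hγj : |γ j| ≤ ζ * n * a + K + B := by
    have hcj : c j = T + ∑ i, X i j * ε i := by
      simp only [hc_def, hw_def, hT_def]
      simp [Matrix.mulVec, dotProduct, Matrix.transpose_apply, mul_add,
        Finset.sum_add_distrib]
    calc |γ j| = |c j + η j| := by rw [hγc j]
      _ ≤ |c j| + |η j| := abs_add_le _ _
      _ ≤ |T| + |∑ i, X i j * ε i| + |η j| := by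
          rw [hcj]; linarith [abs_add_le T (∑ i, X i j * ε i)]
      _ ≤ ζ * n * a + K + B := by linarith [hT, hXε j, hη j]
  -- final arithmetic
  have h2 : r * |γ j| ≤ r * (ζ * n * a + K + B) := mul_le_mul_of_nonneg_left hγj hr.le
  have h3 : r * (ζ * n * a + K + B) < r * M := by nlinarith [hdiv, hsep, hr]
  exact lt_of_mul_lt_mul_left (lt_of_le_of_lt h2 h3) hr.le
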